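/- (Proposition 3, tightness in k.) Fix v̄ = 1. For every M ≥ 1, every menu 𝓜, every N and k with 2 ≤ k ≤ N and N ≥ |𝓜| + 1, there exists a Borel probability measure G on valuations such that, taking 𝔾 = {G} and the ambiguity set 𝔽 = {F : F̄ ∈ 𝔾}, one has inf_{F∈𝔽} E_F[Rᵏ_𝓜(v)] ≤ inf_{F∈𝔽} V_𝓜(F) − (k−1)/(2N). -/

import Mathlib

open MeasureTheory
open scoped ENNReal BigOperators

namespace RankGuaranteedAuctions

/-- A bundle of items, where the set of items is `Fin M`. -/
abbrev Bundle (M : ℕ) := Finset (Fin M)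

/-- A valuation assigns a real value to every bundle. -/
abbrev Valuation (M : ℕ) := Bundle M → ℝ

/-- A valuation is normalized: value `0` for the empty bundle and values in `[0, vbar]`. -/
def IsValuation (M : ℕ) (vbar : ℝ) (v : Valuation M) : Prop :=
  v ∅ = 0 ∧ ∀ b : Bundle M, 0 ≤ v b ∧ v b ≤ vbar

/-- A menu is a nonempty collection of nonempty bundles. -/
def IsMenu (M : ℕ) (Menu : Finset (Bundle M)) : Prop :=
  Menu.Nonempty ∧ ∅ ∉ Menu

/-- The complete menu `2^S` of all nonempty bundles. -/
noncomputable def completeMenu (M : ℕ) : Finset (Bundle M) :=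
  Finset.univ.erase ∅

/-- A feasible allocation: a set of pairwise disjoint bundles from the menu. -/
def Feasible (M : ℕ) (Menu X : Finset (Bundle M)) : Prop :=
  X ⊆ Menu ∧ ∀ b ∈ X, ∀ b' ∈ X, b ≠ b' → Disjoint b b'

/-- The maximum of `∑ b ∈ X, f b` over feasible allocations `X` from the menu. -/
noncomputable def maxAlloc (M : ℕ) (Menu : Finset (Bundle M)) (f : Bundle M → ℝ) : ℝ :=
  sSup {y : ℝ | ∃ X : Finset (Bundle M), Feasible M Menu X ∧ y = ∑ b ∈ X, f b}

/-- The `k`-th highest value among `w 0, …, w (N-1)` (for `1 ≤ k ≤ N`):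
the maximum over sets `T` of `k` bidders of the minimum of `w` on `T`. -/
noncomputable def kthHighest (N : ℕ) (w : Fin N → ℝ) (k : ℕ) : ℝ :=
  sSup {x : ℝ | ∃ T : Finset (Fin N), T.card = k ∧ x = sInf (w '' (T : Set (Fin N)))}

/-- The `k`-th rank guarantee `R^k_𝓜(v)`. -/
noncomputable def rankGuarantee (M N : ℕ) (Menu : Finset (Bundle M))
    (v : Fin N → Valuation M) (k : ℕ) : ℝ :=
  maxAlloc M Menu fun b => kthHighest N (fun n => v n b) k

/-- The ex-post efficient surplus: the maximum over feasible allocations `X` with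
`|X| ≤ N` and injective assignments `ι` of bundles in `X` to bidders of the total value. -/
noncomputable def surplusEx (M N : ℕ) (Menu : Finset (Bundle M))
    (v : Fin N → Valuation M) : ℝ :=
  sSup {y : ℝ | ∃ X : Finset (Bundle M), Feasible M Menu X ∧ X.card ≤ N ∧
    ∃ ι : Bundle M → Fin N, Set.InjOn ι ↑X ∧ y = ∑ b ∈ X, v (ι b) b}

/-- The average `F̄ = (1/N) ∑ₙ Fₙ` of the bidder-marginals of `F`. -/
noncomputable def avgMarginal (M N : ℕ) (F : Measure (Fin N → Valuation M)) :
    Measure (Valuation M) :=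
  (N : ℝ≥0∞)⁻¹ • ∑ n : Fin N, F.map (fun v => v n)

/-- The ex-ante efficient surplus `V_𝓜(F)`. -/
noncomputable def Vsurplus (M N : ℕ) (Menu : Finset (Bundle M))
    (F : Measure (Fin N → Valuation M)) : ℝ :=
  ∫ v, surplusEx M N Menu v ∂F

/-- A Borel probability measure on valuation profiles (supported on profiles of
valuations bounded by `vbar`). -/
def ProfileOK (M N : ℕ) (vbar : ℝ) (F : Measure (Fin N → Valuation M)) : Prop :=
  IsProbabilityMeasure F ∧ F {v | ∀ n, IsValuation M vbar (v n)} = 1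

/-- A Borel probability measure on valuations (supported on valuations bounded by `vbar`). -/
def ValOK (M : ℕ) (vbar : ℝ) (G : Measure (Valuation M)) : Prop :=
  IsProbabilityMeasure G ∧ G {w | IsValuation M vbar w} = 1

/-- `κ` is a partition of the bundle `b` into nonempty, pairwise disjoint parts. -/
def IsPartitionOf (M : ℕ) (κ : Finset (Bundle M)) (b : Bundle M) : Prop :=
  (∀ c ∈ κ, c ≠ ∅) ∧ (∀ c ∈ κ, ∀ c' ∈ κ, c ≠ c' → Disjoint c c') ∧ κ.sup id = b

/-- Feasibility for homogeneous goods: total number of allocated items is at most `M`. -/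
def FeasibleQ (M : ℕ) (Menu X : Finset (Bundle M)) : Prop :=
  X ⊆ Menu ∧ ∑ b ∈ X, b.card ≤ M

/-- The maximum of `∑ b ∈ X, f b` over homogeneous-goods-feasible allocations `X`. -/
noncomputable def maxAllocQ (M : ℕ) (Menu : Finset (Bundle M)) (f : Bundle M → ℝ) : ℝ :=
  sSup {y : ℝ | ∃ X : Finset (Bundle M), FeasibleQ M Menu X ∧ y = ∑ b ∈ X, f b}

/-- An assignment of pairwise disjoint bundles to the `N` bidders. -/
def IsAssignment (M N : ℕ) (a : Fin N → Bundle M) : Prop :=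
  ∀ n n' : Fin N, n ≠ n' → Disjoint (a n) (a n')

/-- An assignment is efficient if it maximizes total value over all assignments. -/
def IsEfficient (M N : ℕ) (v : Fin N → Valuation M) (a : Fin N → Bundle M) : Prop :=
  IsAssignment M N a ∧
    ∀ a' : Fin N → Bundle M, IsAssignment M N a' → ∑ n, v n (a' n) ≤ ∑ n, v n (a n)

/-- The VCG revenue at the efficient assignment `a`: the sum over bidders `n` of
`max_{assignments to bidders other than n} ∑_{n' ≠ n} v^{n'} − ∑_{n' ≠ n} v^{n'}(a n')`. -/
noncomputable def vcgRevenue (M N : ℕ) (v : Fin N → Valuation M)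
    (a : Fin N → Bundle M) : ℝ :=
  ∑ n : Fin N,
    (sSup {y : ℝ | ∃ a' : Fin N → Bundle M, IsAssignment M N a' ∧ a' n = ∅ ∧
        y = ∑ n' ∈ Finset.univ.erase n, v n' (a' n')}
      - ∑ n' ∈ Finset.univ.erase n, v n' (a n'))

/-- An unbounded valuation: value `0` for the empty bundle and nonnegative values. -/
def IsValuationNN (M : ℕ) (v : Valuation M) : Prop :=
  v ∅ = 0 ∧ ∀ b : Bundle M, 0 ≤ v b

/-- The top-`(k-1)/N` quantile of `v b` under `G`. -/
noncomputable def quantileQ (M N k : ℕ) (G : Measure (Valuation M)) (b : Bundle M) : ℝ :=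
  sInf {q : ℝ | 0 ≤ q ∧ G {w | q < w b} ≤ ((k - 1 : ℕ) : ℝ≥0∞) / (N : ℝ≥0∞)}

/-!
Let `G` be uniform on the two valuations `w₁ = 𝟙[i ∈ ·]` and `0`, where `i` is an item of a menu
bundle `b`. For every `F` with `F̄ = G` the efficient surplus dominates the average over bidders
of `vⁿ(b)`, whose expectation is `E_G[w(b)] = 1/2`.

Conversely, fix a set `S` of `k - 1` bidders. With probability `1/2`, let the bidders in `S` have
valuation `w₁` and all others `0`; then every bundle has `k`-th highest value `0`. Otherwise
give all bidders the same valuation, `w₁` with probability `(N - k + 1)/N` and `0` else. The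
average marginal is `G`, and since at most one bundle of a feasible allocation contains `i`,
the rank guarantee is at most `1`, and nonzero only with probability `(N - k + 1)/(2N)`.
-/

open Finset

section RankGuarantee

variable {M N : ℕ}

lemma kthHighest_const {k : ℕ} (hk : 0 < k) (hkN : k ≤ N) (x : ℝ) :
    kthHighest N (fun _ => x) k = x := by
  have hinf (T : Finset (Fin N)) (hT : #T = k) :
      sInf ((fun _ => x) '' (T : Set (Fin N))) = x := by
    rw [(coe_nonempty.2 (card_pos.1 (hT ▸ hk))).image_const, csInf_singleton]
  have hset : {y : ℝ | ∃ T : Finset (Fin N), #T = k ∧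
      y = sInf ((fun _ => x) '' (T : Set (Fin N)))} = {x} := by
    obtain ⟨T₀, -, hT₀⟩ :=
      exists_subset_card_eq (s := (univ : Finset (Fin N))) (by simpa using hkN)
    ext y
    constructor
    · rintro ⟨T, hT, rfl⟩
      exact hinf T hT
    · rintro rfl
      exact ⟨T₀, hT₀, (hinf T₀ hT₀).symm⟩
  rw [kthHighest, hset, csSup_singleton]

lemma kthHighest_eq_zero_of_card_lt {w : Fin N → ℝ} {k : ℕ} {S : Finset (Fin N)} (hw : 0 ≤ w)
    (hS : #S < k) (hwS : ∀ n ∉ S, w n = 0) : kthHighest N w k = 0 := by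
  refine le_antisymm (Real.sSup_le ?_ le_rfl)
    (Real.sSup_nonneg fun y ⟨T, _, hy⟩ => hy ▸ Real.sInf_nonneg ?_)
  · rintro y ⟨T, hT, rfl⟩
    obtain ⟨n, hnT, hnS⟩ := exists_mem_notMem_of_card_lt_card (hT ▸ hS)
    exact hwS n hnS ▸ csInf_le ⟨0, by rintro _ ⟨m, -, rfl⟩; exact hw m⟩ ⟨n, hnT, rfl⟩
  · rintro _ ⟨m, -, rfl⟩
    exact hw m

variable {Menu : Finset (Bundle M)}

lemma feasible_empty : Feasible M Menu ∅ :=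
  ⟨empty_subset _, by simp⟩

lemma bddAbove_allocationValues (f : Bundle M → ℝ) :
    BddAbove {y : ℝ | ∃ X : Finset (Bundle M), Feasible M Menu X ∧ y = ∑ b ∈ X, f b} :=
  ((Set.finite_range fun X : Finset (Bundle M) => ∑ b ∈ X, f b).subset
    (by rintro _ ⟨X, -, rfl⟩; exact ⟨X, rfl⟩)).bddAbove

lemma maxAlloc_nonneg (f : Bundle M → ℝ) : 0 ≤ maxAlloc M Menu f :=
  le_csSup (bddAbove_allocationValues f) ⟨∅, feasible_empty, by simp⟩

lemma maxAlloc_le {f : Bundle M → ℝ} {C : ℝ}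
    (h : ∀ X, Feasible M Menu X → ∑ b ∈ X, f b ≤ C) : maxAlloc M Menu f ≤ C :=
  csSup_le ⟨0, ∅, feasible_empty, by simp⟩ (by rintro _ ⟨X, hX, rfl⟩; exact h X hX)

lemma maxAlloc_zero : maxAlloc M Menu 0 = 0 :=
  le_antisymm (maxAlloc_le fun X _ => by simp) (maxAlloc_nonneg 0)

def itemIndicator (i : Fin M) : Valuation M := fun b => if i ∈ b then 1 else 0

lemma isValuation_itemIndicator (i : Fin M) : IsValuation M 1 (itemIndicator i) :=
  ⟨by simp [itemIndicator], fun b => by unfold itemIndicator; split_ifs <;> norm_num⟩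

lemma itemIndicator_nonneg (i : Fin M) : 0 ≤ itemIndicator i :=
  fun b => ((isValuation_itemIndicator i).2 b).1

lemma isValuation_zero {vbar : ℝ} (h : 0 ≤ vbar) : IsValuation M vbar 0 :=
  ⟨rfl, fun _ => ⟨le_rfl, h⟩⟩

lemma maxAlloc_itemIndicator_le_one (i : Fin M) : maxAlloc M Menu (itemIndicator i) ≤ 1 := by
  refine maxAlloc_le fun X hX => ?_
  have hdisj : #{b ∈ X | i ∈ b} ≤ 1 := card_le_one.2 fun b hb b' hb' => by
    simp only [mem_filter] at hb hb'
    by_contra hne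
    exact disjoint_left.1 (hX.2 b hb.1 b' hb'.1 hne) hb.2 hb'.2
  simpa [itemIndicator, sum_boole] using hdisj

lemma rankGuarantee_nonneg (v : Fin N → Valuation M) (k : ℕ) :
    0 ≤ rankGuarantee M N Menu v k :=
  maxAlloc_nonneg _

lemma rankGuarantee_const {k : ℕ} (hk : 0 < k) (hkN : k ≤ N) (u : Valuation M) :
    rankGuarantee M N Menu (fun _ => u) k = maxAlloc M Menu u := by
  simp only [rankGuarantee, kthHighest_const hk hkN]

lemma rankGuarantee_eq_zero_of_card_lt {v : Fin N → Valuation M} {k : ℕ} {S : Finset (Fin N)}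
    (hv : ∀ n, 0 ≤ v n) (hS : #S < k) (hvS : ∀ n ∉ S, v n = 0) :
    rankGuarantee M N Menu v k = 0 := by
  have hkth : (fun b => kthHighest N (fun n => v n b) k) = 0 := funext fun b =>
    kthHighest_eq_zero_of_card_lt (fun n => hv n b) hS fun n hn => by simp [hvS n hn]
  rw [rankGuarantee, hkth, maxAlloc_zero]

end RankGuarantee

section ProfileLaws

variable {M N : ℕ}

lemma avgMarginal_add (F F' : Measure (Fin N → Valuation M)) :
    avgMarginal M N (F + F') = avgMarginal M N F + avgMarginal M N F' := by
  simp only [avgMarginal, Measure.map_add _ _ (measurable_pi_apply _), sum_add_distrib, smul_add]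

lemma avgMarginal_smul (c : ℝ≥0∞) (F : Measure (Fin N → Valuation M)) :
    avgMarginal M N (c • F) = c • avgMarginal M N F := by
  simp only [avgMarginal, Measure.map_smul, ← smul_sum, smul_comm c]

lemma avgMarginal_dirac (v : Fin N → Valuation M) :
    avgMarginal M N (Measure.dirac v) = (N : ℝ≥0∞)⁻¹ • ∑ n, Measure.dirac (v n) := by
  simp only [avgMarginal, Measure.map_dirac]

lemma measurableSet_isValuationProfile (vbar : ℝ) :
    MeasurableSet {v : Fin N → Valuation M | ∀ n, IsValuation M vbar (v n)} := by
  simp only [IsValuation, Set.ofPred_forall, Set.ofPred_and]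
  measurability

lemma ae_isValuation_of_profileOK {vbar : ℝ} {F : Measure (Fin N → Valuation M)}
    (hF : ProfileOK M N vbar F) : ∀ᵐ v ∂F, ∀ n, IsValuation M vbar (v n) := by
  have : IsProbabilityMeasure F := hF.1
  exact (ae_iff_measure_eq (measurableSet_isValuationProfile vbar).nullMeasurableSet).2
    (by rw [hF.2, measure_univ])

lemma integral_avgMarginal {F : Measure (Fin N → Valuation M)} {g : Valuation M → ℝ}
    (hg : Measurable g) (hint : ∀ n, Integrable (fun v => g (v n)) F) :
    ∫ w, g w ∂avgMarginal M N F = (N : ℝ)⁻¹ * ∑ n, ∫ v, g (v n) ∂F := by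
  have hmap (n : Fin N) : Integrable g (F.map fun v => v n) :=
    (integrable_map_measure hg.aestronglyMeasurable (measurable_pi_apply n).aemeasurable).2
      (hint n)
  rw [avgMarginal, integral_smul_measure, integral_finsetSum_measure fun n _ => hmap n,
    ENNReal.toReal_inv, ENNReal.toReal_natCast, smul_eq_mul]
  congr 1
  exact sum_congr rfl fun n _ =>
    integral_map (measurable_pi_apply n).aemeasurable hg.aestronglyMeasurable

noncomputable def constProfileMix (v : Fin N → Valuation M) : Measure (Fin N → Valuation M) :=
  (N : ℝ≥0∞)⁻¹ • ∑ n, Measure.dirac fun _ => v n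

lemma avgMarginal_constProfileMix [NeZero N] (v : Fin N → Valuation M) :
    avgMarginal M N (constProfileMix v) = avgMarginal M N (Measure.dirac v) := by
  simp only [constProfileMix, avgMarginal, Measure.map_smul,
    Measure.map_finset_sum' (measurable_pi_apply _).aemeasurable, Measure.map_dirac, sum_const,
    card_univ, Fintype.card_fin, ← Nat.cast_smul_eq_nsmul ℝ≥0∞, smul_smul]
  rw [ENNReal.mul_inv_cancel (NeZero.ne _) (ENNReal.natCast_ne_top N), mul_one]

lemma integral_constProfileMix (g : (Fin N → Valuation M) → ℝ) (v : Fin N → Valuation M) :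
    ∫ x, g x ∂constProfileMix v = (N : ℝ)⁻¹ * ∑ n, g fun _ => v n := by
  rw [constProfileMix, integral_smul_measure,
    integral_finsetSum_measure fun n _ => integrable_dirac enorm_lt_top]
  simp [integral_dirac]

def splitProfile (S : Finset (Fin N)) (u u' : Valuation M) : Fin N → Valuation M :=
  fun n => if n ∈ S then u else u'

noncomputable def splitLaw (S : Finset (Fin N)) (u u' : Valuation M) :
    Measure (Fin N → Valuation M) :=
  (2⁻¹ : ℝ≥0∞) •
    (Measure.dirac (splitProfile S u u') + constProfileMix (splitProfile Sᶜ u u'))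

lemma valOK_half_dirac_add_dirac {vbar : ℝ} {u u' : Valuation M} (hu : IsValuation M vbar u)
    (hu' : IsValuation M vbar u') :
    ValOK M vbar ((2⁻¹ : ℝ≥0∞) • (Measure.dirac u + Measure.dirac u')) := by
  have h {s : Set (Valuation M)} (hus : u ∈ s) (hus' : u' ∈ s) :
      ((2⁻¹ : ℝ≥0∞) • (Measure.dirac u + Measure.dirac u')) s = 1 := by
    simp [Measure.dirac_apply_of_mem hus, Measure.dirac_apply_of_mem hus',
      ENNReal.inv_two_add_inv_two]
  exact ⟨⟨h trivial trivial⟩, h (s := {w | IsValuation M vbar w}) hu hu'⟩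

lemma integral_half_dirac_add_dirac (g : Valuation M → ℝ) (u u' : Valuation M) :
    ∫ w, g w ∂((2⁻¹ : ℝ≥0∞) • (Measure.dirac u + Measure.dirac u')) =
      2⁻¹ * (g u + g u') := by
  rw [integral_smul_measure, integral_add_measure (integrable_dirac enorm_lt_top)
    (integrable_dirac enorm_lt_top), integral_dirac, integral_dirac]
  norm_num

variable [NeZero N]

lemma avgMarginal_splitLaw (S : Finset (Fin N)) (u u' : Valuation M) :
    avgMarginal M N (splitLaw S u u') =
      (2⁻¹ : ℝ≥0∞) • (Measure.dirac u + Measure.dirac u') := by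
  have hpair (n : Fin N) : Measure.dirac (splitProfile S u u' n) +
      Measure.dirac (splitProfile Sᶜ u u' n) = Measure.dirac u + Measure.dirac u' := by
    by_cases hn : n ∈ S <;> simp [splitProfile, hn, add_comm]
  rw [splitLaw, avgMarginal_smul, avgMarginal_add, avgMarginal_constProfileMix,
    avgMarginal_dirac, avgMarginal_dirac, ← smul_add, ← sum_add_distrib,
    sum_congr rfl fun n _ => hpair n, sum_const, card_univ, Fintype.card_fin,
    ← Nat.cast_smul_eq_nsmul ℝ≥0∞, smul_smul (N : ℝ≥0∞)⁻¹,
    ENNReal.inv_mul_cancel (NeZero.ne _) (ENNReal.natCast_ne_top N), one_smul]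

lemma splitLaw_apply_eq_one {S : Finset (Fin N)} {u u' : Valuation M}
    {s : Set (Fin N → Valuation M)} (hu : (fun _ => u) ∈ s) (hu' : (fun _ => u') ∈ s)
    (hsplit : splitProfile S u u' ∈ s) : splitLaw S u u' s = 1 := by
  have hconst (n : Fin N) : (fun _ => splitProfile Sᶜ u u' n) ∈ s := by
    unfold splitProfile; split_ifs <;> assumption
  simp only [splitLaw, constProfileMix, Measure.smul_apply, Measure.add_apply,
    Measure.coe_finsetSum, Finset.sum_apply, Measure.dirac_apply_of_mem hsplit,
    Measure.dirac_apply_of_mem (hconst _), sum_const, card_univ, Fintype.card_fin, nsmul_eq_mul,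
    mul_one, smul_eq_mul]
  rw [ENNReal.inv_mul_cancel (NeZero.ne _) (ENNReal.natCast_ne_top N), one_add_one_eq_two,
    ENNReal.inv_mul_cancel two_ne_zero ENNReal.ofNat_ne_top]

lemma integral_splitLaw (g : (Fin N → Valuation M) → ℝ) (S : Finset (Fin N))
    (u u' : Valuation M) :
    ∫ x, g x ∂splitLaw S u u' =
      2⁻¹ * (g (splitProfile S u u') +
        (N : ℝ)⁻¹ * ∑ n, g fun _ => splitProfile Sᶜ u u' n) := by
  have hint : Integrable g (constProfileMix (splitProfile Sᶜ u u')) :=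
    (integrable_finsetSum_measure.2 fun n _ => integrable_dirac enorm_lt_top).smul_measure
      (ENNReal.inv_ne_top.2 (Nat.cast_ne_zero.2 (NeZero.ne N)))
  rw [splitLaw, integral_smul_measure, integral_add_measure (integrable_dirac enorm_lt_top) hint,
    integral_dirac, integral_constProfileMix]
  norm_num

lemma profileOK_splitLaw {vbar : ℝ} {u u' : Valuation M} (hu : IsValuation M vbar u)
    (hu' : IsValuation M vbar u') (S : Finset (Fin N)) : ProfileOK M N vbar (splitLaw S u u') :=
  ⟨⟨splitLaw_apply_eq_one trivial trivial trivial⟩, splitLaw_apply_eq_one (fun _ => hu)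
    (fun _ => hu') fun n => by unfold splitProfile; split_ifs <;> assumption⟩

end ProfileLaws

section Surplus

variable {M N : ℕ} {Menu : Finset (Bundle M)}

open Classical in
noncomputable def allocations (M N : ℕ) (Menu : Finset (Bundle M)) :
    Finset (Finset (Bundle M) × (Bundle M → Fin N)) :=
  {p | Feasible M Menu p.1 ∧ #p.1 ≤ N ∧ Set.InjOn p.2 p.1}

lemma mem_allocations {p : Finset (Bundle M) × (Bundle M → Fin N)} :
    p ∈ allocations M N Menu ↔ Feasible M Menu p.1 ∧ #p.1 ≤ N ∧ Set.InjOn p.2 p.1 := by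
  simp [allocations]

variable [NeZero N]

lemma empty_mem_allocations :
    ((∅, fun _ => 0) : Finset (Bundle M) × (Bundle M → Fin N)) ∈ allocations M N Menu :=
  mem_allocations.2 ⟨feasible_empty, by simp, by simp⟩

lemma allocations_nonempty : (allocations M N Menu).Nonempty :=
  ⟨_, empty_mem_allocations⟩

lemma surplusEx_eq_sup' (v : Fin N → Valuation M) :
    surplusEx M N Menu v = (allocations M N Menu).sup' allocations_nonempty
      fun p => ∑ b ∈ p.1, v (p.2 b) b := by
  rw [sup'_eq_csSup_image, surplusEx]
  congr 1
  ext y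
  simp only [Set.mem_ofPred_eq, Set.mem_image, mem_coe, mem_allocations, Prod.exists]
  constructor
  · rintro ⟨X, hX, hcard, ι, hι, rfl⟩
    exact ⟨X, ι, ⟨hX, hcard, hι⟩, rfl⟩
  · rintro ⟨X, ι, ⟨hX, hcard, hι⟩, rfl⟩
    exact ⟨X, hX, hcard, ι, hι, rfl⟩

lemma measurable_surplusEx : Measurable (surplusEx M N Menu) := by
  have h : surplusEx M N Menu = (allocations M N Menu).sup' allocations_nonempty
      fun p (v : Fin N → Valuation M) => ∑ b ∈ p.1, v (p.2 b) b :=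
    funext fun v => by rw [surplusEx_eq_sup', Finset.sup'_apply]
  rw [h]
  exact measurable_sup' _ fun p _ => measurable_sum _ fun b _ =>
    (measurable_pi_apply b).comp (measurable_pi_apply (p.2 b))

lemma surplusEx_nonneg (v : Fin N → Valuation M) : 0 ≤ surplusEx M N Menu v := by
  rw [surplusEx_eq_sup']
  exact le_of_eq_of_le (by simp)
    (le_sup' (fun p => ∑ b ∈ p.1, v (p.2 b) b) empty_mem_allocations)

lemma le_surplusEx {b : Bundle M} (hb : b ∈ Menu) (v : Fin N → Valuation M) (n : Fin N) :
    v n b ≤ surplusEx M N Menu v := by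
  have hmem : (({b}, fun _ => n) : Finset (Bundle M) × (Bundle M → Fin N)) ∈
      allocations M N Menu :=
    mem_allocations.2 ⟨⟨singleton_subset_iff.2 hb, by simp⟩,
      by simpa using Nat.one_le_iff_ne_zero.2 (NeZero.ne N), by simp⟩
  rw [surplusEx_eq_sup']
  exact le_of_eq_of_le (by simp) (le_sup' (fun p => ∑ b ∈ p.1, v (p.2 b) b) hmem)

lemma surplusEx_le {vbar : ℝ} {v : Fin N → Valuation M} (hv : ∀ n, IsValuation M vbar (v n)) :
    surplusEx M N Menu v ≤ N * vbar := by
  have hvbar : 0 ≤ vbar := ((hv 0).2 ∅).1.trans ((hv 0).2 ∅).2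
  rw [surplusEx_eq_sup']
  refine sup'_le _ _ fun p hp => ?_
  calc ∑ b ∈ p.1, v (p.2 b) b ≤ #p.1 * vbar := by
        simpa using sum_le_card_nsmul _ _ _ fun b _ => ((hv (p.2 b)).2 b).2
    _ ≤ N * vbar := by gcongr; exact_mod_cast (mem_allocations.1 hp).2.1

lemma integral_avgMarginal_le_Vsurplus {vbar : ℝ} {F : Measure (Fin N → Valuation M)}
    (hF : ProfileOK M N vbar F) {b : Bundle M} (hb : b ∈ Menu) :
    ∫ w, w b ∂avgMarginal M N F ≤ Vsurplus M N Menu F := by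
  have : IsProbabilityMeasure F := hF.1
  have hae := ae_isValuation_of_profileOK hF
  have hint_eval (n : Fin N) : Integrable (fun v : Fin N → Valuation M => v n b) F := by
    have hm : Measurable fun v : Fin N → Valuation M => v n b := by fun_prop
    refine .of_bound hm.aestronglyMeasurable vbar ?_
    filter_upwards [hae] with v hv
    rw [Real.norm_of_nonneg ((hv n).2 b).1]
    exact ((hv n).2 b).2
  have hint_surplus : Integrable (surplusEx M N Menu) F := by
    refine .of_bound measurable_surplusEx.aestronglyMeasurable (N * vbar) ?_
    filter_upwards [hae] with v hv
    rw [Real.norm_of_nonneg (surplusEx_nonneg v)]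
    exact surplusEx_le hv
  have hN : (0 : ℝ) < N := Nat.cast_pos.2 (Nat.pos_of_neZero N)
  calc ∫ w, w b ∂avgMarginal M N F = ∫ v, (N : ℝ)⁻¹ * ∑ n, v n b ∂F := by
        rw [integral_avgMarginal (measurable_pi_apply b) hint_eval, integral_const_mul,
          integral_finsetSum _ fun n _ => hint_eval n]
    _ ≤ Vsurplus M N Menu F := by
        refine integral_mono ((integrable_finsetSum _ fun n _ => hint_eval n).const_mul _)
          hint_surplus fun v => ?_
        rw [inv_mul_le_iff₀ hN]
        simpa using sum_le_card_nsmul univ _ _ fun n _ => le_surplusEx hb v n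

end Surplus

lemma integral_rankGuarantee_splitLaw_le {M N : ℕ} [NeZero N] (Menu : Finset (Bundle M))
    {k : ℕ} (hk : 0 < k) (hkN : k ≤ N) {S : Finset (Fin N)} (hS : #S < k) (i : Fin M) :
    ∫ v, rankGuarantee M N Menu v k ∂splitLaw S (itemIndicator i) 0 ≤
      1 / 2 - #S / (2 * N) := by
  have hsplit : rankGuarantee M N Menu (splitProfile S (itemIndicator i) 0) k = 0 :=
    rankGuarantee_eq_zero_of_card_lt
      (fun n => by unfold splitProfile; split_ifs; exacts [itemIndicator_nonneg i, le_rfl])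
      hS fun n hn => by simp [splitProfile, hn]
  have hconst (n : Fin N) :
      rankGuarantee M N Menu (fun _ => splitProfile Sᶜ (itemIndicator i) 0 n) k ≤
        if n ∈ Sᶜ then 1 else 0 := by
    rw [rankGuarantee_const hk hkN]
    unfold splitProfile
    split_ifs
    · exact maxAlloc_itemIndicator_le_one i
    · exact maxAlloc_zero.le
  have hN : (N : ℝ) ≠ 0 := Nat.cast_ne_zero.2 (NeZero.ne N)
  calc ∫ v, rankGuarantee M N Menu v k ∂splitLaw S (itemIndicator i) 0
      ≤ 2⁻¹ * (0 + (N : ℝ)⁻¹ * #Sᶜ) := by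
        rw [integral_splitLaw, hsplit]
        gcongr
        refine (sum_le_sum fun n _ => hconst n).trans_eq ?_
        rw [sum_boole, filter_mem_eq_inter, univ_inter]
    _ = 1 / 2 - #S / (2 * N) := by
        rw [card_compl, Fintype.card_fin, Nat.cast_sub (by simpa using card_le_univ S)]
        field_simp
        ring

theorem rank_guarantee_tightness_in_k_general
    (M N : ℕ)
    (Menu : Finset (Bundle M)) (hMenu : IsMenu M Menu)
    (k : ℕ) (hk2 : 2 ≤ k) (hkN : k ≤ N) :
    ∃ G : Measure (Valuation M), ValOK M 1 G ∧
      sInf ((fun F => ∫ v, rankGuarantee M N Menu v k ∂F) ''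
          {F : Measure (Fin N → Valuation M) |
            ProfileOK M N 1 F ∧ avgMarginal M N F = G}) ≤
        sInf ((fun F => Vsurplus M N Menu F) ''
          {F : Measure (Fin N → Valuation M) |
            ProfileOK M N 1 F ∧ avgMarginal M N F = G})
          - ((k : ℝ) - 1) / (2 * (N : ℝ)) := by
  obtain ⟨⟨b, hb⟩, hempty⟩ := hMenu
  obtain ⟨i, hi⟩ := nonempty_iff_ne_empty.2 (ne_of_mem_of_not_mem hb hempty)
  have : NeZero N := ⟨by omega⟩
  obtain ⟨S, -, hS⟩ :=
    exists_subset_card_eq (show k - 1 ≤ #(univ : Finset (Fin N)) by simp; omega)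
  set G : Measure (Valuation M) :=
    (2⁻¹ : ℝ≥0∞) • (Measure.dirac (itemIndicator i) + Measure.dirac 0)
  set 𝔽 := {F : Measure (Fin N → Valuation M) | ProfileOK M N 1 F ∧ avgMarginal M N F = G}
  have hval := isValuation_zero (M := M) zero_le_one
  have hF : splitLaw S (itemIndicator i) 0 ∈ 𝔽 :=
    ⟨profileOK_splitLaw (isValuation_itemIndicator i) hval S, avgMarginal_splitLaw S _ _⟩
  have hbdd : BddBelow ((fun F => ∫ v, rankGuarantee M N Menu v k ∂F) '' 𝔽) :=
    ⟨0, by rintro _ ⟨F, -, rfl⟩; exact integral_nonneg fun v => rankGuarantee_nonneg v k⟩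
  have hlow := (csInf_le hbdd ⟨_, hF, rfl⟩).trans
    (integral_rankGuarantee_splitLaw_le Menu (by omega) hkN (by omega) i)
  have hup : 1 / 2 ≤ sInf ((fun F => Vsurplus M N Menu F) '' 𝔽) := by
    refine le_csInf ⟨_, _, hF, rfl⟩ ?_
    rintro _ ⟨F, ⟨hF, hFG⟩, rfl⟩
    have hGb : ∫ w, w b ∂G = 1 / 2 := by
      rw [integral_half_dirac_add_dirac]
      norm_num [itemIndicator, hi]
    exact hGb ▸ hFG ▸ integral_avgMarginal_le_Vsurplus hF hb
  rw [hS, Nat.cast_sub (by omega), Nat.cast_one] at hlow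
  exact ⟨G, valOK_half_dirac_add_dirac (isValuation_itemIndicator i) hval, by linarith⟩

/-- Proposition 3, tightness in `k`: with `v̄ = 1`, for every `M ≥ 1`, menu
`𝓜`, and `2 ≤ k ≤ N`, `N ≥ |𝓜| + 1`, there is a Borel probability measure `G` on
valuations such that, with `𝔾 = {G}` and `𝔽 = {F : F̄ = G}`,
`inf_{F∈𝔽} E_F[R^k_𝓜(v)] ≤ inf_{F∈𝔽} V_𝓜(F) − (k−1)/(2N)`. -/
theorem rank_guarantee_tightness_in_k
    (M N : ℕ) (hM : 1 ≤ M)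
    (Menu : Finset (Bundle M)) (hMenu : IsMenu M Menu)
    (hN : Menu.card + 1 ≤ N) (k : ℕ) (hk2 : 2 ≤ k) (hkN : k ≤ N) :
    ∃ G : Measure (Valuation M), ValOK M 1 G ∧
      sInf ((fun F => ∫ v, rankGuarantee M N Menu v k ∂F) ''
          {F : Measure (Fin N → Valuation M) |
            ProfileOK M N 1 F ∧ avgMarginal M N F = G}) ≤
        sInf ((fun F => Vsurplus M N Menu F) ''
          {F : Measure (Fin N → Valuation M) |
            ProfileOK M N 1 F ∧ avgMarginal M N F = G})
          - ((k : ℝ) - 1) / (2 * (N : ℝ)) :=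
  rank_guarantee_tightness_in_k_general M N Menu hMenu k hk2 hkN

end RankGuaranteedAuctions
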